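/- arXiv:1311.2242 — 7 statements merged into one kernel-verified Lean document; each statement's English description precedes it below -/
import Mathlib

section
/- Let p be an odd prime. Then W_p ≡ B_{p-1} − 1 + 1/p (mod p), i.e. the rational number W_p − (B_{p-1} − 1 + 1/p) equals p·(a/b) for some integers a, b with p ∤ b. -/
open Finset

/-- `x ≡ y (mod p^k)` for rationals: `x - y = p^k * (c/d)` with `p ∤ d`. -/
def ratCongr (p k : ℕ) (x y : ℚ) : Prop :=
  ∃ c d : ℤ, ¬ (p : ℤ) ∣ d ∧ x - y = (p : ℚ) ^ k * ((c : ℚ) / (d : ℚ))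

/-- The Wilson quotient `W_p = ((p-1)! + 1)/p` (an integer by Wilson's theorem). -/
def wilsonQuotient (p : ℕ) : ℤ := ((Nat.factorial (p - 1) : ℤ) + 1) / p

/-- The Fermat quotient `q_p(a) = (a^(p-1) - 1)/p` (an integer for `p ∤ a`). -/
def fermatQuotient (p a : ℕ) : ℤ := ((a : ℤ) ^ (p - 1) - 1) / p

/-- A prime `p` is a Wilson prime if `p ∣ W_p`. -/
def IsWilsonPrime (p : ℕ) : Prop := (p : ℤ) ∣ wilsonQuotient p

/-- A prime `p` is a Lerch prime if `∑_{a=1}^{p-1} q_p(a) ≡ W_p (mod p²)`. -/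
def IsLerchPrime (p : ℕ) : Prop :=
  (p : ℤ) ^ 2 ∣ (∑ a ∈ Icc 1 (p - 1), fermatQuotient p a) - wilsonQuotient p

/-- The harmonic number `H_a = ∑_{k=1}^{a} 1/k`. -/
def harmonicNum (a : ℕ) : ℚ := ∑ k ∈ Icc 1 a, (1 : ℚ) / k

/-- The generalized harmonic number `H_{a,2} = ∑_{k=1}^{a} 1/k²`. -/
def harmonicNum2 (a : ℕ) : ℚ := ∑ k ∈ Icc 1 a, (1 : ℚ) / (k : ℚ) ^ 2

/-!
Put `S = ∑_{a<p} a^(p-1)`. Faulhaber's formula gives `S = p B_{p-1} + p² z` with `z` `p`-integral: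
the other terms are `B_i (p choose i) p^(p-1-i)` for `i < p - 1`, where `B_i` is `p`-integral
(again by Faulhaber, now for the exponent `i`, since `p ∣ ∑_{a<p} a^i`) and `p ∣ (p choose i)`
for `0 < i`. On the other hand Lerch's argument gives `S ≡ (p-1)! + p (mod p²)`: multiplying the
Fermat congruences `a^(p-1) ≡ 1 (mod p)` gives `((p-1)!)^(p-1) - 1 ≡ ∑_{0<a<p} (a^(p-1) - 1)`
modulo `p²`, and Wilson's `(p-1)! ≡ -1 (mod p)` together with `p - 1` even gives
`((p-1)!)^(p-1) - 1 ≡ (p-1)! + 1 (mod p²)`. Hence `p W_p = (p-1)! + 1 ≡ p B_{p-1} - p + 1`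
modulo `p²`, and dividing by `p` gives the claim.
-/

-- The localization `ℤ_(p)` of `ℤ`, as a subring of `ℚ`.
def pIntegral (p : ℕ) [Fact p.Prime] : Subring ℚ where
  carrier := {x | ¬ p ∣ x.den}
  zero_mem' := by simpa using (Fact.out : p.Prime).ne_one
  one_mem' := by simpa using (Fact.out : p.Prime).ne_one
  add_mem' {x y} hx hy h :=
    ((Nat.Prime.dvd_mul Fact.out).1 (h.trans (Rat.add_den_dvd x y))).elim hx hy
  mul_mem' {x y} hx hy h :=
    ((Nat.Prime.dvd_mul Fact.out).1 (h.trans (Rat.mul_den_dvd x y))).elim hx hy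
  neg_mem' {x} hx := by simpa [Rat.den_neg_eq_den] using hx

section SquareDivisibility

variable {R : Type*} [CommRing R] {m : R}

lemma sq_dvd_prod_sub_one_sub_sum {ι : Type*} (s : Finset ι) (x : ι → R)
    (hx : ∀ i ∈ s, m ∣ x i - 1) : m ^ 2 ∣ ∏ i ∈ s, x i - 1 - ∑ i ∈ s, (x i - 1) := by
  classical
  induction s using Finset.induction with
  | empty => simp
  | insert a s ha ih =>
    have hxa := hx a (mem_insert_self a s)
    have ih := ih fun i hi ↦ hx i (mem_insert_of_mem hi)
    have hprod : m ∣ ∏ i ∈ s, x i - 1 := by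
      have hsum : m ∣ ∑ i ∈ s, (x i - 1) := dvd_sum fun i hi ↦ hx i (mem_insert_of_mem hi)
      simpa using ((dvd_pow_self m two_ne_zero).trans ih).add hsum
    rw [prod_insert ha, sum_insert ha]
    have key : x a * ∏ i ∈ s, x i - 1 - (x a - 1 + ∑ i ∈ s, (x i - 1)) =
        (x a - 1) * (∏ i ∈ s, x i - 1) + (∏ i ∈ s, x i - 1 - ∑ i ∈ s, (x i - 1)) := by ring
    rw [key]
    rw [sq] at ih ⊢
    exact (mul_dvd_mul hxa hprod).add ih

lemma sq_dvd_pow_sub_one_sub_mul {x : R} (hx : m ∣ x - 1) (n : ℕ) :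
    m ^ 2 ∣ x ^ n - 1 - n * (x - 1) := by
  simpa [mul_sub] using sq_dvd_prod_sub_one_sub_sum (range n) (fun _ ↦ x) fun _ _ ↦ hx

end SquareDivisibility

lemma sum_range_pow_eq_mul_bernoulli_add (n k : ℕ) :
    ∑ a ∈ range n, (a : ℚ) ^ k = n * (bernoulli k +
      ∑ i ∈ range k, bernoulli i * (k + 1).choose i * (n : ℚ) ^ (k - i) / (k + 1)) := by
  rw [sum_range_pow, sum_range_succ, add_comm, mul_add, mul_sum, Nat.choose_succ_self_right,
    Nat.add_sub_cancel_left]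
  congr 1
  · push_cast
    field_simp
  · refine sum_congr rfl fun i hi ↦ ?_
    rw [Nat.sub_add_comm (mem_range.1 hi).le, pow_succ]
    ring

section Prime

variable {p : ℕ} [hp : Fact p.Prime]

lemma inv_natCast_mem_pIntegral {n : ℕ} (hn : ¬ p ∣ n) : (n : ℚ)⁻¹ ∈ pIntegral p := by
  change ¬ p ∣ (n : ℚ)⁻¹.den
  rw [Rat.inv_natCast_den]
  split_ifs <;> simp_all

lemma ratCongr_of_sub_eq_pow_mul {k : ℕ} {x y z : ℚ} (hz : z ∈ pIntegral p)
    (h : x - y = (p : ℚ) ^ k * z) : ratCongr p k x y :=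
  ⟨z.num, z.den, by exact_mod_cast hz, by rw [h, Int.cast_natCast, Rat.num_div_den]⟩

lemma prime_dvd_factorial_add_one : (p : ℤ) ∣ ((p - 1).factorial : ℕ) + 1 := by
  rw [← ZMod.intCast_zmod_eq_zero_iff_dvd]
  simp [ZMod.wilsons_lemma]

lemma sum_range_pow_sub_one_modEq_factorial_add (hodd : Odd p) :
    ∑ a ∈ range p, (a : ℤ) ^ (p - 1) ≡ ((p - 1).factorial : ℕ) + p [ZMOD p ^ 2] := by
  set P : ℤ := (((p - 1).factorial : ℕ) : ℤ)
  have hwilson : (p : ℤ) ∣ P + 1 := prime_dvd_factorial_add_one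
  have hfermat : ∀ a ∈ Ico 1 p, (p : ℤ) ∣ (a : ℤ) ^ (p - 1) - 1 := by
    intro a ha
    rw [mem_Ico] at ha
    refine (Int.ModEq.pow_card_sub_one_eq_one hp.out ?_).symm.dvd
    rw [Int.isCoprime_iff_gcd_eq_one, Int.gcd_comm, Int.gcd_natCast_natCast]
    exact Nat.coprime_of_lt_prime (by omega) ha.2 hp.out
  have hprod : ∏ a ∈ Ico 1 p, (a : ℤ) ^ (p - 1) = P ^ (p - 1) := by
    rw [prod_pow, ← Nat.cast_prod, ← Nat.sub_add_cancel hp.out.one_le, prod_Ico_id_eq_factorial]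
  have hsum : ∑ a ∈ range p, (a : ℤ) ^ (p - 1) =
      ∑ a ∈ Ico 1 p, ((a : ℤ) ^ (p - 1) - 1) + (p - 1) := by
    rw [range_eq_Ico, sum_eq_sum_Ico_succ_bot hp.out.pos, sum_sub_distrib, sum_const, Nat.card_Ico]
    simp [Nat.cast_sub hp.out.one_le, zero_pow (Nat.sub_ne_zero_of_lt hp.out.one_lt)]
  have h1 := sq_dvd_prod_sub_one_sub_sum _ _ hfermat
  have h2 := sq_dvd_pow_sub_one_sub_mul (x := -P) (m := (p : ℤ))
    (by rw [show -P - 1 = -(P + 1) by ring]; exact hwilson.neg_right) (p - 1)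
  rw [hprod] at h1
  rw [(Nat.Odd.sub_odd hodd odd_one).neg_pow, Nat.cast_sub hp.out.one_le, Nat.cast_one] at h2
  have h3 : (p : ℤ) ^ 2 ∣ p * (P + 1) := by
    rw [sq]
    exact mul_dvd_mul_left _ hwilson
  rw [Int.modEq_iff_dvd, hsum]
  have key : P + p - (∑ a ∈ Ico 1 p, ((a : ℤ) ^ (p - 1) - 1) + (p - 1)) =
      (P ^ (p - 1) - 1 - ∑ a ∈ Ico 1 p, ((a : ℤ) ^ (p - 1) - 1)) -
        (P ^ (p - 1) - 1 - (p - 1) * (-P - 1)) + p * (P + 1) := by ring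
  rw [key]
  exact (h1.sub h2).add h3

lemma prime_dvd_sum_range_pow {k : ℕ} (hk : k < p - 1) :
    (p : ℤ) ∣ ∑ a ∈ range p, (a : ℤ) ^ k := by
  rw [← ZMod.intCast_zmod_eq_zero_iff_dvd]
  push_cast
  have hsum : ∑ a ∈ range p, (a : ZMod p) ^ k = ∑ x : ZMod p, x ^ k :=
    sum_nbij' (fun a ↦ (a : ZMod p)) ZMod.val (fun _ _ ↦ mem_univ _)
      (fun x _ ↦ mem_range.2 x.val_lt) (fun a ha ↦ ZMod.val_cast_of_lt (mem_range.1 ha))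
      (fun x _ ↦ ZMod.natCast_zmod_val x) fun _ _ ↦ rfl
  rw [hsum]
  exact FiniteField.sum_pow_lt_card_sub_one (ZMod p) k (by rwa [ZMod.card])

lemma bernoulli_mem_pIntegral {k : ℕ} (hk : k < p - 1) : bernoulli k ∈ pIntegral p := by
  induction k using Nat.strong_induction_on with
  | _ k ih =>
  have hp0 : (p : ℚ) ≠ 0 := Nat.cast_ne_zero.2 hp.out.ne_zero
  have hsum : (∑ a ∈ range p, (a : ℚ) ^ k) / p ∈ pIntegral p := by
    obtain ⟨M, hM⟩ := prime_dvd_sum_range_pow hk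
    have hM' : ∑ a ∈ range p, (a : ℚ) ^ k = p * M := by exact_mod_cast hM
    rw [hM', mul_div_cancel_left₀ _ hp0]
    exact intCast_mem _ M
  have hlower : ∑ i ∈ range k, bernoulli i * (k + 1).choose i * (p : ℚ) ^ (k - i) / (k + 1)
      ∈ pIntegral p := by
    refine sum_mem fun i hi ↦ ?_
    have hik := mem_range.1 hi
    have hkp : ¬ p ∣ k + 1 := fun h ↦ by have := Nat.le_of_dvd (by omega) h; omega
    rw [div_eq_mul_inv]
    exact mul_mem (mul_mem (mul_mem (ih i hik (hik.trans hk)) (natCast_mem _ _))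
      (pow_mem (natCast_mem _ _) _)) (by exact_mod_cast inv_natCast_mem_pIntegral hkp)
  rw [sum_range_pow_eq_mul_bernoulli_add, mul_div_cancel_left₀ _ hp0] at hsum
  simpa using sub_mem hsum hlower

lemma exists_sum_range_pow_sub_mul_bernoulli_eq_sq_mul (hodd : Odd p) :
    ∃ z ∈ pIntegral p,
      ∑ a ∈ range p, (a : ℚ) ^ (p - 1) - p * bernoulli (p - 1) = (p : ℚ) ^ 2 * z := by
  have hp3 : 3 ≤ p := by have := hp.out.two_le; rcases hodd with ⟨r, rfl⟩; omega
  have hp0 : (p : ℚ) ≠ 0 := Nat.cast_ne_zero.2 hp.out.ne_zero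
  have h := sum_range_pow_eq_mul_bernoulli_add p (p - 1)
  rw [Nat.sub_add_cancel hp.out.one_le, Nat.cast_pred hp.out.pos, sub_add_cancel] at h
  refine ⟨∑ i ∈ range (p - 1), bernoulli i * p.choose i * (p : ℚ) ^ (p - 1 - i) / p / p, ?_, ?_⟩
  · refine sum_mem fun i hi ↦ ?_
    have hi := mem_range.1 hi
    rcases eq_or_ne i 0 with rfl | hi0
    · have : bernoulli 0 * p.choose 0 * (p : ℚ) ^ (p - 1 - 0) / p / p = (p : ℚ) ^ (p - 3) := by
        rw [bernoulli_zero, Nat.choose_zero_right, show p - 1 - 0 = p - 3 + 1 + 1 by omega]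
        field_simp
        ring
      rw [this]
      exact pow_mem (natCast_mem _ _) _
    · obtain ⟨c, hc⟩ := hp.out.dvd_choose_self hi0 (by omega)
      have : bernoulli i * p.choose i * (p : ℚ) ^ (p - 1 - i) / p / p =
          bernoulli i * c * (p : ℚ) ^ (p - 2 - i) := by
        rw [hc, show p - 1 - i = p - 2 - i + 1 by omega]
        push_cast
        field_simp
        ring
      rw [this]
      exact mul_mem (mul_mem (bernoulli_mem_pIntegral hi) (natCast_mem _ _))
        (pow_mem (natCast_mem _ _) _)
  · rw [h, mul_add, add_sub_cancel_left, sq, mul_assoc]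
    congr 1
    rw [mul_sum]
    refine sum_congr rfl fun i _ ↦ ?_
    field_simp

end Prime

theorem stmt_0 (p : ℕ) (hp : p.Prime) (hodd : Odd p) :
    ratCongr p 1 ((wilsonQuotient p : ℚ))
      (bernoulli (p - 1) - 1 + 1 / (p : ℚ)) := by
  have := Fact.mk hp
  obtain ⟨m, hm⟩ := (sum_range_pow_sub_one_modEq_factorial_add hodd).dvd
  obtain ⟨z, hz, hS⟩ := exists_sum_range_pow_sub_mul_bernoulli_eq_sq_mul hodd
  have hm' : ((p - 1).factorial : ℚ) + p - ∑ a ∈ range p, (a : ℚ) ^ (p - 1) = p ^ 2 * m := by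
    exact_mod_cast hm
  have hW : (p : ℚ) * wilsonQuotient p = (p - 1).factorial + 1 := by
    have h : (p : ℤ) * wilsonQuotient p = (p - 1).factorial + 1 :=
      Int.mul_ediv_cancel' prime_dvd_factorial_add_one
    exact_mod_cast h
  refine ratCongr_of_sub_eq_pow_mul (add_mem hz (intCast_mem _ m)) ?_
  have hp0 : (p : ℚ) ≠ 0 := Nat.cast_ne_zero.2 hp.ne_zero
  apply mul_left_cancel₀ hp0
  field_simp
  linear_combination hW + hm' + hS
end

section
/- Let p be an odd prime. Then (B_{2p−2} − 1 + 1/p)/(2p−2) ≡ (B_{p−1} − 1 + 1/p)/(p−1) (mod p) as rational numbers. -/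
open Finset

/-!
Write `S m = ∑_{k<p} k^m`. Faulhaber's formula expresses `S m - p B_m` as a sum of terms
`p B_i · C(m,i) · p^(m-i) / (m-i+1)`. By von Staudt–Clausen `p B_i` is `p`-integral, and for
`p ≥ 5` the factor `p^(m-i) / (m-i+1)` is divisible by `p²` as soon as `m - i ≥ 2`; the one
remaining term carries `B_{m-1}`, which vanishes for even `m ≥ 4`. Hence `p B_m ≡ S m (mod p²)`.
Multiplying the difference of the two sides by `p (2p-2)` gives
`p B_{2p-2} - 2 p B_{p-1} + p - 1 ≡ S (2p-2) - 2 S (p-1) + p - 1 = ∑_{k=1}^{p-1} (k^{p-1} - 1)²`,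
which is `0 mod p²` by Fermat's little theorem, and dividing back by `p (2p-2)` costs exactly one
power of `p`. The case `p = 3` is a direct computation.
-/

lemma sum_range_pow_sub_mul_bernoulli (n m : ℕ) :
    ∑ k ∈ range n, (k : ℚ) ^ m - n * bernoulli m
      = ∑ i ∈ range m, n * bernoulli i * m.choose i * (n : ℚ) ^ (m - i) / (m - i + 1 : ℕ) := by
  have hlast : bernoulli m * ((m + 1).choose m : ℕ) * (n : ℚ) ^ (m + 1 - m) / (m + 1)
      = n * bernoulli m := by
    rw [Nat.choose_succ_self_right, Nat.add_sub_cancel_left]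
    push_cast
    field_simp
  rw [sum_range_pow, sum_range_succ, hlast, add_sub_cancel_right]
  refine sum_congr rfl fun i hi => ?_
  have him : i < m := mem_range.1 hi
  have hchoose : ((m + 1).choose i : ℚ) * (m - i + 1 : ℕ) = m.choose i * (m + 1) := by
    have h := Nat.choose_mul_succ_eq m i
    rw [show m + 1 - i = m - i + 1 by omega] at h
    exact_mod_cast h.symm
  rw [show m + 1 - i = m - i + 1 by omega, pow_succ]
  field_simp
  linear_combination (bernoulli i * n ^ (m - i) * n) * hchoose

lemma sum_Ico_pow_sub_one_sq {n m : ℕ} (hn : 1 ≤ n) (hm : m ≠ 0) :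
    ∑ k ∈ Ico 1 n, ((k : ℚ) ^ m - 1) ^ 2
      = ∑ k ∈ range n, (k : ℚ) ^ (2 * m) - 2 * ∑ k ∈ range n, (k : ℚ) ^ m + (n - 1) := by
  induction n, hn using Nat.le_induction with
  | base => simp [hm]
  | succ n hn ih =>
    rw [sum_Ico_succ_top hn, ih, sum_range_succ, sum_range_succ]
    push_cast
    ring

lemma padicValNat_succ_add_two_le {p d : ℕ} [hp : Fact p.Prime] (hp5 : 5 ≤ p) (hd : 2 ≤ d) :
    padicValNat p (d + 1) + 2 ≤ d := by
  have hlt : d + 1 < p ^ (d - 1) :=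
    calc d + 1 < 1 + (d - 1) * 4 := by omega
      _ ≤ (1 + 4) ^ (d - 1) :=
        one_add_mul_le_pow_of_sq_nonneg (by positivity) (by positivity) (by positivity) _
      _ ≤ p ^ (d - 1) := Nat.pow_le_pow_left hp5 _
  have := (Nat.pow_lt_pow_iff_right hp.out.one_lt).1
    ((Nat.le_of_dvd (by omega) pow_padicValNat_dvd).trans_lt hlt)
  omega

section Padic

variable {p : ℕ} [hp : Fact p.Prime]

lemma not_dvd_den_of_padicNorm_le_one {r : ℚ} (h : padicNorm p r ≤ 1) : ¬ p ∣ r.den := by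
  intro hden
  have hnum : ¬ (p : ℤ) ∣ r.num := fun hnum =>
    hp.out.one_lt.ne' (Nat.dvd_one.mp (r.reduced ▸ Nat.dvd_gcd (Int.natCast_dvd.mp hnum) hden))
  have hden_lt : padicNorm p r.den < 1 := (padicNorm.nat_lt_one_iff _).2 hden
  have hden_pos : 0 < padicNorm p r.den :=
    (padicNorm.nonneg _).lt_of_ne' (padicNorm.nonzero (by exact_mod_cast r.den_nz))
  have hr : padicNorm p r = 1 / padicNorm p r.den := by
    rw [← (padicNorm.int_eq_one_iff _).2 hnum, ← padicNorm.div, Rat.num_div_den]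
  rw [hr, div_le_one hden_pos] at h
  linarith

lemma ratCongr_of_padicNorm_sub_le {x y : ℚ} (k : ℕ)
    (h : padicNorm p (x - y) ≤ (p : ℚ) ^ (-k : ℤ)) : ratCongr p k x y := by
  have hp0 : (p : ℚ) ≠ 0 := by exact_mod_cast hp.out.ne_zero
  set r := (x - y) / (p : ℚ) ^ k
  have hr : padicNorm p r ≤ 1 := by
    rw [padicNorm.div, IsAbsoluteValue.abv_pow (padicNorm p), padicNorm.padicNorm_p_of_prime,
      div_le_one (by positivity)]
    simpa [zpow_neg] using h
  refine ⟨r.num, r.den, by exact_mod_cast not_dvd_den_of_padicNorm_le_one hr, ?_⟩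
  rw [Int.cast_natCast, Rat.num_div_den, mul_div_cancel₀ _ (pow_ne_zero k hp0)]

lemma padicNorm_one_div_prime_le {q : ℕ} (hq : q.Prime) : padicNorm p (1 / q) ≤ p := by
  have hp1 : (1 : ℚ) ≤ p := by exact_mod_cast hp.out.one_lt.le
  rw [padicNorm.div, padicNorm.one]
  obtain rfl | hne := eq_or_ne q p
  · simp [padicNorm.padicNorm_p_of_prime]
  · rw [(padicNorm.nat_eq_one_iff _).2 fun h =>
      hne ((Nat.prime_dvd_prime_iff_eq hp.out hq).1 h).symm]
    simpa using hp1

lemma padicNorm_bernoulli_le (n : ℕ) : padicNorm p (bernoulli n) ≤ p := by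
  have hp1 : (1 : ℚ) ≤ p := by exact_mod_cast hp.out.one_lt.le
  obtain ⟨k, rfl⟩ | hodd := Nat.even_or_odd n
  · obtain ⟨z, hz⟩ := Bernoulli.vonStaudt_clausen k
    rw [← two_mul, eq_sub_of_add_eq hz.symm]
    refine padicNorm.sub.trans (max_le ((padicNorm.of_int z).trans hp1) ?_)
    exact padicNorm.sum_le' (fun q hq => padicNorm_one_div_prime_le (mem_filter.1 hq).2.1)
      (by positivity)
  · obtain rfl | hn := eq_or_ne n 1
    · rw [bernoulli_one, neg_div, padicNorm.neg]
      exact_mod_cast padicNorm_one_div_prime_le Nat.prime_two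
    · rw [bernoulli_eq_zero_of_odd hodd (by grind), padicNorm.zero]
      positivity

lemma padicNorm_mul_bernoulli_le_one (n : ℕ) : padicNorm p (p * bernoulli n) ≤ 1 := by
  rw [padicNorm.mul, padicNorm.padicNorm_p_of_prime]
  exact inv_mul_le_one_of_le₀ (padicNorm_bernoulli_le n) (by positivity)

lemma padicNorm_pow_div_succ_le (hp5 : 5 ≤ p) {d : ℕ} (hd : 2 ≤ d) :
    padicNorm p ((p : ℚ) ^ d / (d + 1 : ℕ)) ≤ (p : ℚ) ^ (-2 : ℤ) := by
  have hp0 : (p : ℚ) ≠ 0 := by exact_mod_cast hp.out.ne_zero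
  have hv := padicValNat_succ_add_two_le hp5 hd
  rw [padicNorm.eq_zpow_of_nonzero (div_ne_zero (pow_ne_zero d hp0) (by positivity)),
    padicValRat.div (pow_ne_zero d hp0) (by positivity), padicValRat.pow,
    padicValRat.self hp.out.one_lt, padicValRat.of_nat]
  exact zpow_le_zpow_right₀ (by exact_mod_cast hp.out.one_lt.le) (by omega)

lemma padicNorm_sum_range_pow_sub_mul_bernoulli_le (hp5 : 5 ≤ p) {m : ℕ} (hm : 4 ≤ m)
    (hm_even : Even m) :
    padicNorm p (∑ k ∈ range p, (k : ℚ) ^ m - p * bernoulli m) ≤ (p : ℚ) ^ (-2 : ℤ) := by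
  rw [sum_range_pow_sub_mul_bernoulli]
  refine padicNorm.sum_le' (fun i hi => ?_) (by positivity)
  have him : i < m := mem_range.1 hi
  obtain rfl | hi' := eq_or_ne i (m - 1)
  · -- this term is only divisible by `p`, but it vanishes
    rw [bernoulli_eq_zero_of_odd (Nat.Even.sub_odd (by omega) hm_even odd_one) (by omega)]
    simp [padicNorm.zero]
  · calc padicNorm p (p * bernoulli i * m.choose i * (p : ℚ) ^ (m - i) / (m - i + 1 : ℕ))
        = padicNorm p (p * bernoulli i) * padicNorm p (m.choose i)
            * padicNorm p ((p : ℚ) ^ (m - i) / (m - i + 1 : ℕ)) := by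
          rw [mul_div_assoc, padicNorm.mul, padicNorm.mul]
      _ ≤ (p : ℚ) ^ (-2 : ℤ) := by
          have hcoeff := mul_le_one₀ (padicNorm_mul_bernoulli_le_one (p := p) i)
            (padicNorm.nonneg (p := p) _) (padicNorm.of_nat (m.choose i))
          exact (mul_le_of_le_one_left (padicNorm.nonneg (p := p) _) hcoeff).trans
            (padicNorm_pow_div_succ_le hp5 (by omega))

lemma padicNorm_pow_sub_one_le {k : ℕ} (hk : ¬ p ∣ k) :
    padicNorm p ((k : ℚ) ^ (p - 1) - 1) ≤ (p : ℚ) ^ (-1 : ℤ) := by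
  have hfermat : ((p ^ 1 : ℕ) : ℤ) ∣ (k : ℤ) ^ (p - 1) - 1 := by
    rw [pow_one]
    exact (Int.ModEq.pow_card_sub_one_eq_one hp.out
      (Nat.isCoprime_iff_coprime.2 ((hp.out.coprime_iff_not_dvd.2 hk).symm))).symm.dvd
  have := padicNorm.dvd_iff_norm_le.1 hfermat
  push_cast at this
  exact this

lemma padicNorm_sum_pow_sub_one_sq_le :
    padicNorm p (∑ k ∈ Ico 1 p, ((k : ℚ) ^ (p - 1) - 1) ^ 2) ≤ (p : ℚ) ^ (-2 : ℤ) := by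
  refine padicNorm.sum_le' (fun k hk => ?_) (by positivity)
  obtain ⟨hk1, hkp⟩ := mem_Ico.1 hk
  have hfermat := padicNorm_pow_sub_one_le (p := p) (Nat.not_dvd_of_pos_of_lt hk1 hkp)
  calc padicNorm p (((k : ℚ) ^ (p - 1) - 1) ^ 2)
      = padicNorm p ((k : ℚ) ^ (p - 1) - 1) ^ 2 := IsAbsoluteValue.abv_pow (padicNorm p) _ 2
    _ ≤ ((p : ℚ) ^ (-1 : ℤ)) ^ 2 := by gcongr; exact padicNorm.nonneg _
    _ = (p : ℚ) ^ (-2 : ℤ) := by rw [← zpow_natCast, ← zpow_mul]; norm_num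

lemma padicNorm_two_mul_sub_one_eq_one (hp2 : p ≠ 2) : padicNorm p (2 * ((p : ℚ) - 1)) = 1 := by
  have := hp.out.two_le
  have hcast : 2 * ((p : ℚ) - 1) = (2 * (p - 1) : ℕ) := by
    rw [Nat.cast_mul, Nat.cast_sub (by omega)]
    norm_num
  rw [hcast, padicNorm.nat_eq_one_iff, hp.out.dvd_mul]
  rintro (h | h) <;> have := Nat.le_of_dvd (by omega) h <;> omega

theorem padicNorm_bernoulli_quotient_sub_le (hp5 : 5 ≤ p) :
    padicNorm p ((bernoulli (2 * p - 2) - 1 + 1 / (p : ℚ)) / (2 * (p : ℚ) - 2)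
      - (bernoulli (p - 1) - 1 + 1 / (p : ℚ)) / ((p : ℚ) - 1)) ≤ (p : ℚ) ^ (-1 : ℤ) := by
  have hp0 : (p : ℚ) ≠ 0 := by positivity
  have heven : Even (p - 1) := Nat.Odd.sub_odd (hp.out.odd_of_ne_two (by omega)) odd_one
  set R : ℕ → ℚ := fun m => ∑ k ∈ range p, (k : ℚ) ^ m - p * bernoulli m
  set F : ℚ := ∑ k ∈ Ico 1 p, ((k : ℚ) ^ (p - 1) - 1) ^ 2
  have hdiff : (bernoulli (2 * p - 2) - 1 + 1 / (p : ℚ)) / (2 * (p : ℚ) - 2)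
      - (bernoulli (p - 1) - 1 + 1 / (p : ℚ)) / ((p : ℚ) - 1)
      = (2 * R (p - 1) - R (2 * (p - 1)) + F) / (2 * ((p : ℚ) - 1)) / p := by
    rw [show 2 * p - 2 = 2 * (p - 1) by omega]
    simp only [R, F, sum_Ico_pow_sub_one_sq hp.out.one_lt.le (by omega : p - 1 ≠ 0)]
    field_simp
    ring
  have hR : ∀ m, 4 ≤ m → Even m → padicNorm p (R m) ≤ (p : ℚ) ^ (-2 : ℤ) := fun m hm hme =>
    padicNorm_sum_range_pow_sub_mul_bernoulli_le hp5 hm hme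
  have hnum : padicNorm p (2 * R (p - 1) - R (2 * (p - 1)) + F) ≤ (p : ℚ) ^ (-2 : ℤ) := by
    refine padicNorm.nonarchimedean.trans
      (max_le (padicNorm.sub.trans (max_le ?_ ?_)) padicNorm_sum_pow_sub_one_sq_le)
    · rw [padicNorm.mul]
      exact mul_le_of_le_one_left (padicNorm.nonneg _) (by exact_mod_cast padicNorm.of_nat 2)
        |>.trans (hR _ (by omega) heven)
    · exact hR _ (by omega) (even_two_mul _)
  rw [hdiff, padicNorm.div, padicNorm.div, padicNorm_two_mul_sub_one_eq_one (by omega), div_one,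
    padicNorm.padicNorm_p_of_prime, div_inv_eq_mul]
  calc _ ≤ (p : ℚ) ^ (-2 : ℤ) * p := by gcongr
    _ = (p : ℚ) ^ (-1 : ℤ) := by rw [← zpow_add_one₀ hp0]; norm_num

end Padic

theorem stmt_3 (p : ℕ) (hp : p.Prime) (hodd : Odd p) :
    ratCongr p 1
      ((bernoulli (2 * p - 2) - 1 + 1 / (p : ℚ)) / (2 * (p : ℚ) - 2))
      ((bernoulli (p - 1) - 1 + 1 / (p : ℚ)) / ((p : ℚ) - 1)) := by
  have : Fact p.Prime := ⟨hp⟩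
  obtain rfl | hp5 : p = 3 ∨ 5 ≤ p := by
    obtain ⟨k, rfl⟩ := hodd
    have := hp.two_le
    omega
  · refine ⟨1, 40, by norm_num, ?_⟩
    norm_num [bernoulli_eq_bernoulli'_of_ne_one, bernoulli'_two, bernoulli'_four]
  · exact ratCongr_of_padicNorm_sub_le 1
      (by exact_mod_cast padicNorm_bernoulli_quotient_sub_le hp5)
end

section
/- Let p be an odd prime. Then ∑_{a=1}^{p−1} q_p(a) ≡ W_p (mod p), as a congruence of integers. -/
open Finset

/-!
Multiply the identities `a ^ (p - 1) = 1 + p q_p(a)` over `1 ≤ a ≤ p - 1`. Modulo `p²` the left side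
is `((p - 1)!) ^ (p - 1) = (p W_p - 1) ^ (p - 1) ≡ 1 - (p - 1) p W_p ≡ 1 + p W_p`, using that `p - 1`
is even, while the right side is `1 + p ∑ q_p(a)`. Cancelling one factor `p` gives the congruence.
-/

open Nat

theorem sq_dvd_prod_one_add_mul_sub {R ι : Type*} [CommRing R] (t : R) (s : Finset ι)
    (f : ι → R) : t ^ 2 ∣ ∏ i ∈ s, (1 + t * f i) - (1 + t * ∑ i ∈ s, f i) := by
  induction s using Finset.cons_induction with
  | empty => simp
  | cons a s ha ih =>
    obtain ⟨k, hk⟩ := ih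
    refine ⟨f a * ∑ i ∈ s, f i + (1 + t * f a) * k, ?_⟩
    rw [prod_cons, sum_cons]
    linear_combination (1 + t * f a) * hk

theorem Even.sq_dvd_sub_one_pow_sub {R : Type*} [CommRing R] (x : R) {n : ℕ} (hn : Even n) :
    x ^ 2 ∣ (x - 1) ^ n - (1 - n * x) := by
  have h := sq_dvd_add_pow_sub_sub (-x) 1 n
  rw [← neg_sq, ← hn.neg_pow]
  convert h using 1
  simp only [one_pow]
  ring

theorem mul_wilsonQuotient {p : ℕ} (hp : p.Prime) :
    (p : ℤ) * wilsonQuotient p = ((p - 1)! : ℤ) + 1 := by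
  have := Fact.mk hp
  refine Int.mul_ediv_cancel' ((ZMod.intCast_zmod_eq_zero_iff_dvd _ p).mp ?_)
  push_cast
  rw [ZMod.wilsons_lemma, neg_add_cancel]

theorem mul_fermatQuotient {p a : ℕ} (hp : p.Prime) (ha : ¬p ∣ a) :
    (p : ℤ) * fermatQuotient p a = (a : ℤ) ^ (p - 1) - 1 := by
  have hcop : IsCoprime (a : ℤ) p :=
    Nat.isCoprime_iff_coprime.mpr (hp.coprime_iff_not_dvd.mpr ha).symm
  exact Int.mul_ediv_cancel' (Int.prime_dvd_pow_sub_one hp hcop)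

theorem prod_one_add_mul_fermatQuotient {p : ℕ} (hp : p.Prime) :
    ∏ a ∈ Icc 1 (p - 1), (1 + (p : ℤ) * fermatQuotient p a) = ((p - 1)! : ℤ) ^ (p - 1) := by
  have hfac : ((p - 1)! : ℤ) = ∏ a ∈ Icc 1 (p - 1), (a : ℤ) := by
    rw [← Nat.cast_prod, ← Ico_add_one_right_eq_Icc, prod_Ico_id_eq_factorial]
  rw [hfac, ← prod_pow]
  refine prod_congr rfl fun a ha => ?_
  obtain ⟨ha_pos, ha_lt⟩ := mem_Icc.mp ha
  rw [mul_fermatQuotient hp (Nat.not_dvd_of_pos_of_lt ha_pos (by omega))]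
  ring

theorem stmt_6 (p : ℕ) (hp : p.Prime) (hodd : Odd p) :
    (p : ℤ) ∣ (∑ a ∈ Icc 1 (p - 1), fermatQuotient p a) - wilsonQuotient p := by
  set W := wilsonQuotient p
  have hfac : ((p - 1)! : ℤ) = p * W - 1 := by linarith [mul_wilsonQuotient hp]
  have hprod := sq_dvd_prod_one_add_mul_sub (p : ℤ) (Icc 1 (p - 1)) (fermatQuotient p)
  rw [prod_one_add_mul_fermatQuotient hp, hfac] at hprod
  have hpow := (pow_dvd_pow_of_dvd (dvd_mul_right (p : ℤ) W) 2).trans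
    ((Nat.Odd.sub_odd hodd odd_one).sq_dvd_sub_one_pow_sub ((p : ℤ) * W))
  have hsq : (p : ℤ) ^ 2 ∣ p * ((∑ a ∈ Icc 1 (p - 1), fermatQuotient p a) - W) := by
    have hW : (p : ℤ) ^ 2 ∣ p ^ 2 * W := ⟨W, rfl⟩
    have h := (hpow.sub hprod).sub hW
    push_cast [Nat.cast_sub hp.one_le] at h
    ring_nf at h ⊢
    exact h
  rw [sq] at hsq
  exact (mul_dvd_mul_iff_left (by exact_mod_cast hp.ne_zero)).mp hsq
end

section
/- Let p be a prime with p > 3. Then, as an exact identity of rational numbers, ∑_{a=1}^{p−1} q_p(a) = −1 + 1/p + ∑_{j=1}^{p} binomial(p, j) · p^{j−2} · B_{p−j}. -/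
/-! By Fermat, `∑_{a=1}^{p-1} q_p(a) = (∑_{a<p} a^{p-1} - (p - 1))/p`, and Faulhaber's formula
evaluates the power sum as `(1/p) ∑_{j=1}^{p} C(p,j) p^j B_{p-j}` (after reindexing `i = p - j`). -/

open Finset

theorem sum_range_pow_eq_sum_Icc (n k : ℕ) :
    ∑ a ∈ range n, (a : ℚ) ^ k =
      ∑ j ∈ Icc 1 (k + 1), ((k + 1).choose j : ℚ) * (n : ℚ) ^ j * bernoulli (k + 1 - j) / (k + 1) := by
  rw [sum_range_pow]
  refine sum_nbij' (fun i => k + 1 - i) (fun j => k + 1 - j) ?_ ?_ ?_ ?_ ?_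
  · intro i hi; simp only [mem_range, mem_Icc] at hi ⊢; omega
  · intro j hj; simp only [mem_range, mem_Icc] at hj ⊢; omega
  · intro i hi; simp only [mem_range] at hi; omega
  · intro j hj; simp only [mem_Icc] at hj; omega
  · intro i hi
    rw [mem_range] at hi
    rw [Nat.sub_sub_self hi.le, Nat.choose_symm hi.le]
    ring

theorem fermatQuotient_cast_eq {p a : ℕ} (hp : p.Prime) (ha : ¬ p ∣ a) :
    (fermatQuotient p a : ℚ) = ((a : ℚ) ^ (p - 1) - 1) / p := by
  have hcop : IsCoprime (a : ℤ) p :=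
    Nat.isCoprime_iff_coprime.mpr ((hp.coprime_iff_not_dvd.mpr ha).symm)
  have hdvd : (p : ℤ) ∣ (a : ℤ) ^ (p - 1) - 1 :=
    (Int.ModEq.pow_card_sub_one_eq_one hp hcop).symm.dvd
  rw [fermatQuotient, Int.cast_div_charZero hdvd]
  push_cast
  rfl

theorem sum_fermatQuotient_cast_eq {p : ℕ} (hp : p.Prime) :
    ((∑ a ∈ Icc 1 (p - 1), fermatQuotient p a : ℤ) : ℚ) =
      (∑ a ∈ range p, (a : ℚ) ^ (p - 1)) / p - 1 + 1 / p := by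
  have hndvd : ∀ a ∈ Icc 1 (p - 1), ¬ p ∣ a := fun a ha => by
    rw [mem_Icc] at ha
    exact Nat.not_dvd_of_pos_of_lt ha.1 (by omega)
  have hsum : ∑ a ∈ range p, (a : ℚ) ^ (p - 1) = ∑ a ∈ Icc 1 (p - 1), (a : ℚ) ^ (p - 1) := by
    rw [range_eq_Ico, sum_eq_sum_Ico_succ_bot hp.pos, Nat.cast_zero,
      zero_pow (Nat.sub_ne_zero_of_lt hp.one_lt), zero_add, ← Ico_add_one_right_eq_Icc,
      Nat.sub_add_cancel hp.one_lt.le]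
  have hcard : ((Icc 1 (p - 1)).card : ℚ) = p - 1 := by
    rw [Nat.card_Icc, Nat.add_sub_cancel, Nat.cast_sub hp.one_lt.le, Nat.cast_one]
  have hp0 : (p : ℚ) ≠ 0 := by exact_mod_cast hp.ne_zero
  rw [hsum, Int.cast_sum, sum_congr rfl fun a ha => fermatQuotient_cast_eq hp (hndvd a ha),
    ← sum_div, sum_sub_distrib, sum_const, nsmul_one, hcard]
  field_simp
  ring

theorem stmt_9_general (p : ℕ) (hp : p.Prime) :
    (((∑ a ∈ Icc 1 (p - 1), fermatQuotient p a : ℤ)) : ℚ) =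
      -1 + 1 / (p : ℚ) +
        ∑ j ∈ Icc 1 p, (p.choose j : ℚ) * (p : ℚ) ^ ((j : ℤ) - 2) * bernoulli (p - j) := by
  have hp0 : (p : ℚ) ≠ 0 := by exact_mod_cast hp.ne_zero
  have hpred : p - 1 + 1 = p := Nat.sub_add_cancel hp.one_lt.le
  rw [sum_fermatQuotient_cast_eq hp, sum_range_pow_eq_sum_Icc, hpred, sum_div]
  have hterm : ∀ j ∈ Icc 1 p,
      (p.choose j : ℚ) * (p : ℚ) ^ j * bernoulli (p - j) / ((p - 1 : ℕ) + 1) / p =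
        (p.choose j : ℚ) * (p : ℚ) ^ ((j : ℤ) - 2) * bernoulli (p - j) := by
    intro j _
    rw [Nat.cast_pred hp.pos, sub_add_cancel, zpow_sub₀ hp0, zpow_natCast]
    field_simp
  rw [sum_congr rfl hterm]
  ring

theorem stmt_9 (p : ℕ) (hp : p.Prime) (hp3 : 3 < p) :
    (((∑ a ∈ Icc 1 (p - 1), fermatQuotient p a : ℤ)) : ℚ) =
      -1 + 1 / (p : ℚ) +
        ∑ j ∈ Icc 1 p, (p.choose j : ℚ) * (p : ℚ) ^ ((j : ℤ) - 2) * bernoulli (p - j) :=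
  stmt_9_general p hp
end

section
/- Let p be an odd prime and let a be an integer with 1 ≤ a ≤ p−1. Then binomial(p−1, a) ≡ (−1)^a · (1 − p·H_a + (p²/2)·H_a² − (p²/2)·H_{a,2}) (mod p³) as rational numbers. -/
open Finset

namespace Aux11

/-- p-integral rationals: denominator not divisible by p. -/
def PI (p : ℕ) (x : ℚ) : Prop := ¬ p ∣ x.den

lemma PI_add {p : ℕ} (hp : p.Prime) {x y : ℚ} (hx : PI p x) (hy : PI p y) :
    PI p (x + y) := fun h =>
  ((hp.dvd_mul.1 (h.trans (Rat.add_den_dvd x y))).elim hx hy)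

lemma PI_mul {p : ℕ} (hp : p.Prime) {x y : ℚ} (hx : PI p x) (hy : PI p y) :
    PI p (x * y) := fun h =>
  ((hp.dvd_mul.1 (h.trans (Rat.mul_den_dvd x y))).elim hx hy)

lemma PI_neg {p : ℕ} {x : ℚ} (hx : PI p x) : PI p (-x) := by
  simpa [PI, Rat.neg_den] using hx

lemma PI_int {p : ℕ} (hp : p.Prime) (n : ℤ) : PI p (n : ℚ) := by
  rw [PI, Rat.den_intCast]
  intro h; exact hp.one_lt.ne' (Nat.eq_one_of_dvd_one h)

lemma PI_zero {p : ℕ} (hp : p.Prime) : PI p 0 := by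
  simpa using PI_int hp 0

lemma PI_one {p : ℕ} (hp : p.Prime) : PI p 1 := by
  simpa using PI_int hp 1

lemma PI_inv_nat {p : ℕ} (hp : p.Prime) {k : ℕ} (hk : 0 < k) (hdvd : ¬ p ∣ k) :
    PI p ((k : ℚ)⁻¹) := by
  rw [PI, Rat.inv_natCast_den_of_pos hk]; exact hdvd

lemma PI_sum {p : ℕ} (hp : p.Prime) {s : Finset ℕ} {f : ℕ → ℚ}
    (h : ∀ k ∈ s, PI p (f k)) : PI p (∑ k ∈ s, f k) := by
  induction s using Finset.cons_induction with
  | empty => simpa using PI_zero hp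
  | cons a s ha ih =>
    rw [Finset.sum_cons]
    exact PI_add hp (h a (mem_cons_self a s)) (ih fun k hk => h k (mem_cons_of_mem hk))

lemma key {p : ℕ} (hp : p.Prime) (hp2 : p ≠ 2) (s : Finset ℕ)
    (hs : ∀ k ∈ s, 0 < k ∧ ¬ p ∣ k) :
    ∃ q : ℚ, PI p q ∧
      ∏ k ∈ s, (1 - (p : ℚ) / k) =
        1 - (p : ℚ) * (∑ k ∈ s, 1 / (k : ℚ))
          + (p : ℚ) ^ 2 / 2 * (∑ k ∈ s, 1 / (k : ℚ)) ^ 2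
          - (p : ℚ) ^ 2 / 2 * (∑ k ∈ s, 1 / (k : ℚ) ^ 2)
          + (p : ℚ) ^ 3 * q := by
  induction s using Finset.cons_induction with
  | empty => exact ⟨0, PI_zero hp, by simp⟩
  | cons c s hc ih =>
    obtain ⟨q, hq, heq⟩ := ih fun k hk => hs k (mem_cons_of_mem hk)
    obtain ⟨hcpos, hcdvd⟩ := hs c (mem_cons_self c s)
    set E1 : ℚ := ∑ k ∈ s, 1 / (k : ℚ) with hE1
    set E2 : ℚ := ∑ k ∈ s, 1 / (k : ℚ) ^ 2 with hE2
    have hE1pi : PI p E1 := PI_sum hp fun k hk => by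
      obtain ⟨h1, h2⟩ := hs k (mem_cons_of_mem hk)
      simpa [one_div] using PI_inv_nat hp h1 h2
    have hE2pi : PI p E2 := PI_sum hp fun k hk => by
      obtain ⟨h1, h2⟩ := hs k (mem_cons_of_mem hk)
      have := PI_inv_nat hp h1 h2
      simpa [one_div, sq, mul_inv] using PI_mul hp this this
    have hcpi : PI p ((c : ℚ)⁻¹) := PI_inv_nat hp hcpos hcdvd
    have h2pi : PI p ((2 : ℚ)⁻¹) := by
      have : ¬ p ∣ 2 := fun h => hp2 ((Nat.prime_dvd_prime_iff_eq hp Nat.prime_two).1 h)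
      simpa using PI_inv_nat hp (by norm_num) this
    refine ⟨q + (c : ℚ)⁻¹ * ((2 : ℚ)⁻¹ * (E2 + -(E1 * E1)) + -((p : ℚ) * q)), ?_, ?_⟩
    · have hppi : PI p ((p : ℕ) : ℚ) := by exact_mod_cast PI_int hp (p : ℤ)
      exact PI_add hp hq (PI_mul hp hcpi (PI_add hp
        (PI_mul hp h2pi (PI_add hp hE2pi (PI_neg (PI_mul hp hE1pi hE1pi))))
        (PI_neg (PI_mul hp hppi hq))))
    · rw [Finset.prod_cons, Finset.sum_cons, Finset.sum_cons, heq, ← hE1, ← hE2]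
      have hc0 : (c : ℚ) ≠ 0 := Nat.cast_ne_zero.2 hcpos.ne'
      field_simp
      ring

lemma Icc_one_prod {M : Type*} [CommMonoid M] (f : ℕ → M) (a : ℕ) :
    ∏ k ∈ Icc 1 a, f k = ∏ i ∈ range a, f (i + 1) := by
  induction a with
  | zero => simp
  | succ n ih =>
    rw [Finset.prod_range_succ, ← ih, ← Finset.prod_Icc_succ_top (Nat.le_add_left 1 n)]

end Aux11

theorem stmt_11 (p : ℕ) (hp : p.Prime) (hodd : Odd p) (a : ℕ)
    (ha1 : 1 ≤ a) (ha2 : a ≤ p - 1) :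
    ratCongr p 3 (((p - 1).choose a : ℚ))
      ((-1) ^ a * (1 - (p : ℚ) * harmonicNum a + (p : ℚ) ^ 2 / 2 * (harmonicNum a) ^ 2
        - (p : ℚ) ^ 2 / 2 * harmonicNum2 a)) := by
  have hp2 : p ≠ 2 := by rintro rfl; exact absurd hodd (by decide)
  have hap : a < p := lt_of_le_of_lt ha2 (Nat.sub_lt hp.pos one_pos)
  have hmem : ∀ k ∈ Icc 1 a, 0 < k ∧ ¬ p ∣ k := fun k hk => by
    rw [mem_Icc] at hk
    exact ⟨hk.1, fun hdvd =>
      absurd (Nat.le_of_dvd hk.1 hdvd) (not_le.2 (lt_of_le_of_lt hk.2 hap))⟩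
  obtain ⟨q, hq, heq⟩ := Aux11.key hp hp2 (Icc 1 a) hmem
  have hfacn : ∏ k ∈ Icc 1 a, k = a.factorial := by
    rw [Aux11.Icc_one_prod (fun k => k) a]
    exact Finset.prod_range_add_one_eq_factorial a
  have hfacq : ∏ k ∈ Icc 1 a, (k : ℚ) = (a.factorial : ℚ) := by
    rw [← hfacn]; push_cast; rfl
  have hfac0 : (a.factorial : ℚ) ≠ 0 := Nat.cast_ne_zero.2 a.factorial_ne_zero
  have hdesc : (((p - 1).descFactorial a : ℕ) : ℚ) = ∏ k ∈ Icc 1 a, ((p : ℚ) - k) := by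
    rw [Nat.descFactorial_eq_prod_range,
      Aux11.Icc_one_prod (fun k : ℕ => ((p : ℚ) - k)) a, Nat.cast_prod]
    refine Finset.prod_congr rfl fun i hi => ?_
    rw [mem_range] at hi
    have h1 : i + 1 ≤ p := Nat.succ_le_of_lt (lt_of_lt_of_le hi (le_of_lt hap))
    have h2 : p - 1 - i = p - (i + 1) := by omega
    rw [h2, Nat.cast_sub h1]
  have hchoose : (((p - 1).choose a : ℕ) : ℚ)
      = (-1) ^ a * ∏ k ∈ Icc 1 a, (1 - (p : ℚ) / k) := by
    have h1 : (a.factorial : ℚ) * ((p - 1).choose a : ℚ) = ∏ k ∈ Icc 1 a, ((p : ℚ) - k) := by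
      rw [← hdesc, Nat.descFactorial_eq_factorial_mul_choose]; push_cast
      try ring
    have hcard : (Icc 1 a).card = a := by rw [Nat.card_Icc]; omega
    have h2 : ∏ k ∈ Icc 1 a, ((p : ℚ) - k)
        = (∏ k ∈ Icc 1 a, (k : ℚ)) * ((∏ _x ∈ Icc 1 a, (-1 : ℚ)) * ∏ k ∈ Icc 1 a, (1 - (p : ℚ) / k)) := by
      rw [← Finset.prod_mul_distrib, ← Finset.prod_mul_distrib]
      refine Finset.prod_congr rfl fun k hk => ?_
      have hk0 : (k : ℚ) ≠ 0 := Nat.cast_ne_zero.2 (hmem k hk).1.ne'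
      field_simp
      try ring
    rw [Finset.prod_const, hcard, hfacq] at h2
    exact mul_left_cancel₀ hfac0 (h1.trans h2)
  refine ⟨(-1) ^ a * q.num, (q.den : ℤ),
    fun hdvd => hq (Int.natCast_dvd_natCast.mp hdvd), ?_⟩
  rw [hchoose, heq, harmonicNum, harmonicNum2]
  push_cast
  rw [mul_div_assoc, Rat.num_div_den]
  ring
end

section
/- Let p be an odd prime and let a be an integer with 1 ≤ a ≤ p−1. Then binomial(p−1, a) ≡ (−1)^a · (1 − p·H_a) (mod p²) as rational numbers. -/
open Finset

/-! Since `(p - 1).choose a = ∏_{k ≤ a} (p - k) / k = (-1)^a ∏_{k ≤ a} (1 - p / k)` and every `1 / k`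
with `k < p` is `p`-integral (lies in `(Rat.padicValuation p).integer`), expanding the product leaves `1 - p H_a` plus `p²` times a
`p`-integral rational. -/

lemma ratCongr_of_sub_eq_mul_mem {p : ℕ} [Fact p.Prime] {k : ℕ} {x y r : ℚ}
    (hr : r ∈ (Rat.padicValuation p).integer) (h : x - y = (p : ℚ) ^ k * r) :
    ratCongr p k x y := by
  refine ⟨r.num, r.den, ?_, by rw [h, Int.cast_natCast, Rat.num_div_den]⟩
  rw [Int.natCast_dvd_natCast, ← Rat.padicValuation_le_one_iff]
  exact hr

lemma inv_natCast_mem_padicValuation_integer {p : ℕ} [Fact p.Prime] {k : ℕ} (hk : ¬ p ∣ k) :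
    (k : ℚ)⁻¹ ∈ (Rat.padicValuation p).integer := by
  rw [Valuation.mem_integer_iff, Rat.padicValuation_le_one_iff, Rat.inv_natCast_den]
  split_ifs
  · exact Nat.Prime.not_dvd_one Fact.out
  · exact hk

theorem Subring.exists_prod_one_sub_mul_eq {R ι : Type*} [CommRing R] (S : Subring R)
    (s : Finset ι) {t : R} (ht : t ∈ S) {x : ι → R} (hx : ∀ i ∈ s, x i ∈ S) :
    ∃ r ∈ S, ∏ i ∈ s, (1 - t * x i) = 1 - t * ∑ i ∈ s, x i + t ^ 2 * r := by
  classical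
  induction s using Finset.induction_on with
  | empty => exact ⟨0, S.zero_mem, by simp⟩
  | insert j s hj ih =>
    have hxs i (hi : i ∈ s) : x i ∈ S := hx i (Finset.mem_insert_of_mem hi)
    have hxj : x j ∈ S := hx j (Finset.mem_insert_self j s)
    obtain ⟨r, hr, hprod⟩ := ih hxs
    refine ⟨r + x j * ∑ i ∈ s, x i - t * x j * r, ?_, ?_⟩
    · exact S.sub_mem (S.add_mem hr (S.mul_mem hxj (S.sum_mem hxs))) (S.mul_mem (S.mul_mem ht hxj) hr)
    · rw [Finset.prod_insert hj, Finset.sum_insert hj, hprod]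
      ring

theorem Nat.cast_choose_eq_neg_one_pow_mul_prod {K : Type*} [Field K] [CharZero K] (n a : ℕ) :
    (n.choose a : K) = (-1) ^ a * ∏ k ∈ Icc 1 a, (1 - (n + 1 : K) * (k : K)⁻¹) := by
  induction a with
  | zero => simp
  | succ a ih =>
    rw [Finset.prod_Icc_succ_top (by omega : 1 ≤ a + 1), pow_succ,
      show ∀ s P t : K, s * -1 * (P * t) = s * P * -t by intros; ring, ← ih]
    rcases le_or_gt a n with han | hna
    · have hstep : ((n.choose (a + 1) * (a + 1) : ℕ) : K) = ((n.choose a * (n - a) : ℕ) : K) :=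
        congrArg Nat.cast (Nat.choose_succ_right_eq n a)
      push_cast [Nat.cast_sub han] at hstep ⊢
      field_simp
      linear_combination hstep
    · rw [Nat.choose_eq_zero_of_lt hna, Nat.choose_eq_zero_of_lt (by omega)]
      simp

theorem stmt_12_general (p : ℕ) (hp : p.Prime) (a : ℕ) (ha2 : a ≤ p - 1) :
    ratCongr p 2 (((p - 1).choose a : ℚ))
      ((-1) ^ a * (1 - (p : ℚ) * harmonicNum a)) := by
  have := Fact.mk hp
  set S := (Rat.padicValuation p).integer
  have hinv : ∀ k ∈ Icc 1 a, (k : ℚ)⁻¹ ∈ S := by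
    intro k hk
    obtain ⟨hk1, hka⟩ := Finset.mem_Icc.1 hk
    exact inv_natCast_mem_padicValuation_integer (Nat.not_dvd_of_pos_of_lt hk1 (by omega))
  obtain ⟨r, hr, hprod⟩ := S.exists_prod_one_sub_mul_eq (Icc 1 a) (natCast_mem S p) hinv
  refine ratCongr_of_sub_eq_mul_mem (S.mul_mem (S.pow_mem (S.neg_mem S.one_mem) a) hr) ?_
  have hp1 : ((p - 1 : ℕ) : ℚ) + 1 = p := by
    rw [Nat.cast_sub hp.one_le]; ring
  rw [Nat.cast_choose_eq_neg_one_pow_mul_prod, hp1, hprod, harmonicNum]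
  simp only [one_div]
  ring

theorem stmt_12 (p : ℕ) (hp : p.Prime) (hodd : Odd p) (a : ℕ)
    (ha1 : 1 ≤ a) (ha2 : a ≤ p - 1) :
    ratCongr p 2 (((p - 1).choose a : ℚ))
      ((-1) ^ a * (1 - (p : ℚ) * harmonicNum a)) :=
  stmt_12_general p hp a ha2
end

section
/- Let p be an odd prime. Then W_p ≡ ∑_{a=1}^{p−1} q_p(a) − p·∑_{a=1}^{p−1} H_a·q_p(a) + (p²/2)·∑_{a=1}^{p−1} H_a²·q_p(a) − (p²/2)·∑_{a=1}^{p−1} H_{a,2}·q_p(a) (mod p³) as rational numbers. -/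
open Finset

/-!
With `n = p - 1` even, the `n`-th forward difference of `x ↦ x ^ n - 1` at `0` is `n!`; expanding it
and dividing by `p` gives `W_p = ∑ (-1)^a C(p-1, a) q_p(a)`. Each coefficient is
`(-1)^a C(p-1, a) = ∏_{k ≤ a} (1 - p/k)`, and expanding this product to second order in `p` gives
`1 - p e₁ + p² e₂` modulo `p³`, where `e₁ = H_a` and `e₂ = (H_a² - H_{a,2})/2` are the first two
elementary symmetric functions of the `1/k`, all of which are `p`-integral for `k < p`.
-/

open Nat
open scoped fwdDiff

/-- The localization `ℤ_(p)`, as a subring of `ℚ`. -/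
def pIntegers (p : ℕ) [Fact p.Prime] : Subring ℚ where
  carrier := {x | ¬ p ∣ x.den}
  zero_mem' := by simp [Fact.out (p := p.Prime) |>.ne_one]
  one_mem' := by simp [Fact.out (p := p.Prime) |>.ne_one]
  add_mem' {x y} hx hy h :=
    ((Fact.out : p.Prime).dvd_mul.mp (h.trans (Rat.add_den_dvd x y))).elim hx hy
  mul_mem' {x y} hx hy h :=
    ((Fact.out : p.Prime).dvd_mul.mp (h.trans (Rat.mul_den_dvd x y))).elim hx hy
  neg_mem' {x} hx := by simpa using hx

section pIntegers

variable {p : ℕ} [Fact p.Prime]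

theorem mem_pIntegers {x : ℚ} : x ∈ pIntegers p ↔ ¬ p ∣ x.den := Iff.rfl

theorem one_div_natCast_mem_pIntegers {k : ℕ} (hk : ¬ p ∣ k) : 1 / (k : ℚ) ∈ pIntegers p := by
  have hk0 : k ≠ 0 := by rintro rfl; exact hk (dvd_zero p)
  simpa [mem_pIntegers, Rat.inv_natCast_den, hk0] using hk

theorem ratCongr_of_sub_mem_span {k : ℕ} {x y : ℚ}
    (h : x - y ∈ Submodule.span (pIntegers p) {(p : ℚ) ^ k}) : ratCongr p k x y := by
  obtain ⟨⟨r, hr⟩, hxy⟩ := Submodule.mem_span_singleton.mp h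
  refine ⟨r.num, r.den, by exact_mod_cast hr, ?_⟩
  rw [Int.cast_natCast, Rat.num_div_den, ← hxy, Subring.smul_def, smul_eq_mul, mul_comm]

end pIntegers

-- `x - y ∈ S ∙ t ^ 3` says `x ≡ y` modulo `t³` with coefficients in `S`.
theorem prod_one_sub_mul_sub_mem_span {K ι : Type*} [Field K] {S : Subring K}
    (h2 : (2 : K) ≠ 0) (h2S : (2 : K)⁻¹ ∈ S) {t : K} (ht : t ∈ S) (s : Finset ι) {f : ι → K}
    (hf : ∀ i ∈ s, f i ∈ S) :
    ∏ i ∈ s, (1 - t * f i)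
        - (1 - t * ∑ i ∈ s, f i + t ^ 2 / 2 * ((∑ i ∈ s, f i) ^ 2 - ∑ i ∈ s, f i ^ 2))
      ∈ Submodule.span S {t ^ 3} := by
  classical
  induction s using Finset.induction with
  | empty => simp
  | insert j s hj ih =>
    rw [forall_mem_insert] at hf
    obtain ⟨⟨r, hr⟩, hrs⟩ := Submodule.mem_span_singleton.mp (ih hf.2)
    set e := ∑ i ∈ s, f i
    have he : e ^ 2 - ∑ i ∈ s, f i ^ 2 ∈ S :=
      sub_mem (pow_mem (sum_mem hf.2) 2) (sum_mem fun i hi ↦ pow_mem (hf.2 i hi) 2)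
    refine Submodule.mem_span_singleton.mpr
      ⟨⟨r * (1 - t * f j) - f j * 2⁻¹ * (e ^ 2 - ∑ i ∈ s, f i ^ 2), ?_⟩, ?_⟩
    · exact sub_mem (mul_mem hr (sub_mem (one_mem _) (mul_mem ht hf.1)))
        (mul_mem (mul_mem hf.1 h2S) he)
    · simp only [Subring.smul_def, smul_eq_mul] at hrs ⊢
      rw [prod_insert hj, sum_insert hj, sum_insert hj]
      have hprod : ∏ i ∈ s, (1 - t * f i)
          = r * t ^ 3 + (1 - t * e + t ^ 2 / 2 * (e ^ 2 - ∑ i ∈ s, f i ^ 2)) := by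
        rw [hrs]; ring
      rw [hprod]
      field_simp
      ring

theorem prod_Icc_one_sub_div_eq_neg_one_pow_mul_choose {K : Type*} [Field K] [CharZero K]
    (n a : ℕ) : ∏ k ∈ Icc 1 a, (1 - ((n : K) + 1) / k) = (-1) ^ a * n.choose a := by
  induction a with
  | zero => simp
  | succ a ih =>
    rw [prod_Icc_succ_top (by omega), ih]
    have hchoose : (n.choose (a + 1) : K) * (a + 1) = n.choose a * (n - a) := by
      rcases le_or_gt a n with han | hna
      · have h := congrArg (Nat.cast : ℕ → K) (Nat.choose_succ_right_eq n a)
        push_cast [Nat.cast_sub han] at h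
        exact h
      · simp [Nat.choose_eq_zero_of_lt hna, Nat.choose_eq_zero_of_lt (hna.trans (lt_succ_self a))]
    have ha : (a : K) + 1 ≠ 0 := Nat.cast_add_one_ne_zero a
    push_cast
    field_simp
    linear_combination (-1) ^ a * hchoose

theorem sum_range_neg_one_pow_mul_choose_mul_pow_sub_one {R : Type*} [CommRing R] {n : ℕ}
    (hn : n ≠ 0) :
    ∑ k ∈ range (n + 1), (-1 : R) ^ (n - k) * n.choose k * ((k : R) ^ n - 1) = n ! := by
  have hpow := congr_fun (fwdDiff_iter_eq_factorial (R := R) (n := n)) 0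
  have hone := congr_fun (fwdDiff_iter_pow_eq_zero_of_lt (R := R) (Nat.pos_of_ne_zero hn)) 0
  rw [fwdDiff_iter_eq_sum_shift] at hpow hone
  simp only [zero_add, nsmul_eq_mul, mul_one, pow_zero, zsmul_eq_mul, Pi.zero_apply,
    Pi.natCast_apply] at hpow hone
  simp only [mul_sub, mul_one, sum_sub_distrib]
  push_cast at hpow hone ⊢
  rw [hpow, hone, sub_zero]

theorem sum_Icc_neg_one_pow_mul_choose_mul_pow_sub_one {R : Type*} [CommRing R] {n : ℕ}
    (hn : n ≠ 0) (heven : Even n) :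
    ∑ k ∈ Icc 1 n, (-1 : R) ^ k * n.choose k * ((k : R) ^ n - 1) = n ! + 1 := by
  have hfd := sum_range_neg_one_pow_mul_choose_mul_pow_sub_one (R := R) hn
  rw [range_eq_Ico, sum_eq_sum_Ico_succ_bot (Nat.succ_pos _)] at hfd
  simp only [Nat.succ_eq_add_one, zero_add, Ico_add_one_right_eq_Icc, Nat.sub_zero,
    heven.neg_one_pow, Nat.choose_zero_right, Nat.cast_zero, zero_pow hn, one_mul, Nat.cast_one,
    zero_sub] at hfd
  rw [← hfd, neg_add_cancel_comm]
  refine sum_congr rfl fun k hk ↦ ?_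
  rw [neg_one_pow_congr ((Nat.even_sub (mem_Icc.mp hk).2).trans (iff_true_left heven))]

theorem natCast_mul_wilsonQuotient {p : ℕ} [Fact p.Prime] :
    (p : ℤ) * wilsonQuotient p = (p - 1)! + 1 := by
  refine Int.mul_ediv_cancel' ((ZMod.intCast_zmod_eq_zero_iff_dvd _ p).mp ?_)
  push_cast
  rw [ZMod.wilsons_lemma, neg_add_cancel]

theorem natCast_mul_fermatQuotient {p a : ℕ} [Fact p.Prime] (ha : ¬ p ∣ a) :
    (p : ℤ) * fermatQuotient p a = a ^ (p - 1) - 1 := by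
  refine Int.mul_ediv_cancel' ((ZMod.intCast_zmod_eq_zero_iff_dvd _ p).mp ?_)
  push_cast
  rw [ZMod.pow_card_sub_one_eq_one (by rwa [Ne, ZMod.natCast_eq_zero_iff]), sub_self]

theorem not_dvd_of_mem_Icc_one_sub_one {p a : ℕ} (ha : a ∈ Icc 1 (p - 1)) : ¬ p ∣ a := by
  rw [mem_Icc] at ha
  exact Nat.not_dvd_of_pos_of_lt ha.1 (by omega)

theorem wilsonQuotient_eq_sum_neg_one_pow_mul_choose_mul_fermatQuotient {p : ℕ} [Fact p.Prime]
    (hodd : Odd p) :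
    (wilsonQuotient p : ℚ)
      = ∑ a ∈ Icc 1 (p - 1), (-1) ^ a * ((p - 1).choose a : ℚ) * fermatQuotient p a := by
  have hp : (p : ℚ) ≠ 0 := Nat.cast_ne_zero.mpr (Fact.out : p.Prime).ne_zero
  have hn : p - 1 ≠ 0 := by have := (Fact.out : p.Prime).two_le; omega
  refine mul_left_cancel₀ hp ?_
  have hW := congrArg (Int.cast : ℤ → ℚ) (natCast_mul_wilsonQuotient (p := p))
  push_cast at hW
  rw [hW, mul_sum, ← sum_Icc_neg_one_pow_mul_choose_mul_pow_sub_one hn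
    (Nat.Odd.sub_odd hodd odd_one)]
  refine sum_congr rfl fun a ha ↦ ?_
  have hq := congrArg (Int.cast : ℤ → ℚ)
    (natCast_mul_fermatQuotient (not_dvd_of_mem_Icc_one_sub_one ha))
  push_cast at hq
  rw [← hq]
  ring

theorem neg_one_pow_mul_choose_sub_harmonic_mem_span {p a : ℕ} [Fact p.Prime] (hodd : Odd p)
    (ha : a ≤ p - 1) :
    (-1) ^ a * ((p - 1).choose a : ℚ)
        - (1 - p * harmonicNum a + p ^ 2 / 2 * (harmonicNum a ^ 2 - harmonicNum2 a))
      ∈ Submodule.span (pIntegers p) {(p : ℚ) ^ 3} := by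
  have hp := (Fact.out : p.Prime)
  have h2 : ¬ p ∣ 2 := fun h ↦ by
    rw [(Nat.prime_dvd_prime_iff_eq hp Nat.prime_two).mp h] at hodd
    exact absurd hodd (by decide)
  have hmem := prod_one_sub_mul_sub_mem_span two_ne_zero
    (by simpa using one_div_natCast_mem_pIntegers h2) (natCast_mem (pIntegers p) p) (Icc 1 a)
    (f := fun k ↦ 1 / (k : ℚ)) fun k hk ↦ one_div_natCast_mem_pIntegers
      (not_dvd_of_mem_Icc_one_sub_one (Icc_subset_Icc_right ha hk))
  have hchoose := prod_Icc_one_sub_div_eq_neg_one_pow_mul_choose (K := ℚ) (p - 1) a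
  rw [Nat.cast_pred hp.pos, sub_add_cancel] at hchoose
  simp only [mul_one_div, one_div_pow, hchoose] at hmem
  exact hmem

theorem stmt_13 (p : ℕ) (hp : p.Prime) (hodd : Odd p) :
    ratCongr p 3 ((wilsonQuotient p : ℚ))
      ((∑ a ∈ Icc 1 (p - 1), ((fermatQuotient p a : ℚ)))
        - (p : ℚ) * ∑ a ∈ Icc 1 (p - 1), harmonicNum a * (fermatQuotient p a : ℚ)
        + (p : ℚ) ^ 2 / 2 * ∑ a ∈ Icc 1 (p - 1), (harmonicNum a) ^ 2 * (fermatQuotient p a : ℚ)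
        - (p : ℚ) ^ 2 / 2 * ∑ a ∈ Icc 1 (p - 1), harmonicNum2 a * (fermatQuotient p a : ℚ)) := by
  have := Fact.mk hp
  apply ratCongr_of_sub_mem_span
  rw [wilsonQuotient_eq_sum_neg_one_pow_mul_choose_mul_fermatQuotient hodd]
  have hrhs : (∑ a ∈ Icc 1 (p - 1), ((fermatQuotient p a : ℚ)))
        - (p : ℚ) * ∑ a ∈ Icc 1 (p - 1), harmonicNum a * (fermatQuotient p a : ℚ)
        + (p : ℚ) ^ 2 / 2 * ∑ a ∈ Icc 1 (p - 1), (harmonicNum a) ^ 2 * (fermatQuotient p a : ℚ)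
        - (p : ℚ) ^ 2 / 2 * ∑ a ∈ Icc 1 (p - 1), harmonicNum2 a * (fermatQuotient p a : ℚ)
      = ∑ a ∈ Icc 1 (p - 1), (1 - p * harmonicNum a
          + p ^ 2 / 2 * (harmonicNum a ^ 2 - harmonicNum2 a)) * fermatQuotient p a := by
    simp only [mul_sum, ← sum_sub_distrib, ← sum_add_distrib]
    exact sum_congr rfl fun a _ ↦ by ring
  rw [hrhs, ← sum_sub_distrib]
  refine Submodule.sum_mem _ fun a ha ↦ ?_
  rw [← sub_mul, mul_comm, ← zsmul_eq_mul]
  exact Submodule.smul_of_tower_mem _ _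
    (neg_one_pow_mul_choose_sub_harmonic_mem_span hodd (mem_Icc.mp ha).2)
end
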